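/- arXiv:1905.11984 — 5 statements merged into one kernel-verified Lean document; each statement's English description precedes it below -/
import Mathlib

section
/- For any two linear orders σ and τ over a finite set A of m alternatives, and any sorting algorithm that is an arbitrary interleaving of selection-sort and insertion-sort steps, the count function f (where f(ℓ) is the number of drag-and-drop operations moving an alternative up by exactly ℓ positions during the transformation of σ into τ) is the same for all such algorithms. -/
/-!
Every step, SEL or INS, promotes an alternative `a` of the unsorted suffix that no other suffix
alternative precedes in both `σ` and `τ` (the `σ`-first one for INS, the `τ`-first one for SEL).
Throughout the run the list is a permutation of `σ` whose suffix is still in `σ`-order, and every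
prefix alternative that `τ` ranks below a suffix alternative is ranked above it by `σ`. Under this
invariant the promotion distance of `a` is the number of alternatives ranked above `a` by `σ` and
below `a` by `τ`, which does not depend on the algorithm. Since every alternative is promoted
exactly once, the multiset of promotion distances is the same for every interleaving.
-/

/-- One step of a selection/insertion sorting algorithm at step index `k`
(0-indexed), transforming the current list `l` towards target ranking `τ`.
If `s = true` a selection-sort step is performed (promote the `τ`-most
preferred alternative of the suffix); if `s = false` an insertion-sort step
is performed (promote the alternative currently at position `k`). In both
cases the picked alternative is promoted so that the top `k+1` alternatives
are in `τ`-order. The second component is the number of positions by which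
the alternative was moved up. -/
def ddStep {α : Type*} [DecidableEq α] (τ l : List α) (k : ℕ) (s : Bool) :
    List α × ℕ :=
  match (if s then τ.filter (fun b => decide (b ∈ l.drop k)) else l.drop k).head? with
  | none => (l, 0)
  | some a =>
      let pre := l.take k
      let p := (pre.filter (fun b => decide (τ.idxOf b < τ.idxOf a))).length
      (pre.take p ++ a :: (pre.drop p ++ (l.drop k).erase a), l.idxOf a - p)

/-- The list maintained by the sorting algorithm `s : ℕ → Bool`
(`true` = SEL, `false` = INS) after `k` steps, starting from `σ` with
target `τ`. -/
def ddRun {α : Type*} [DecidableEq α] (τ : List α) (s : ℕ → Bool) (σ : List α) :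
    ℕ → List α
  | 0 => σ
  | k + 1 => (ddStep τ (ddRun τ s σ k) k (s k)).1

/-- The count function `f^{σ→τ}_𝒜(ℓ)`: the number of drag-and-drop operations
that move an alternative up by exactly `ℓ` positions during the execution of
the sorting algorithm `s` transforming `σ` into `τ`. -/
def countF {α : Type*} [DecidableEq α] (τ σ : List α) (s : ℕ → Bool) (ℓ : ℕ) : ℕ :=
  ((Finset.range τ.length).filter
    (fun k => 0 < ℓ ∧ (ddStep τ (ddRun τ s σ k) k (s k)).2 = ℓ)).card

/-- Kendall's Tau distance between two rankings given as lists: the number of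
ordered pairs `(a, b)` ranked `a` above `b` by `σ` but `b` above `a` by `τ`. -/
def kendall {α : Type*} [DecidableEq α] (σ τ : List α) : ℕ :=
  ((σ.toFinset ×ˢ σ.toFinset).filter
    (fun p => σ.idxOf p.1 < σ.idxOf p.2 ∧ τ.idxOf p.2 < τ.idxOf p.1)).card

namespace List

variable {α : Type*} [DecidableEq α]

theorem Sublist.idxOf_eq_countP {c d : List α} (h : c <+ d) (hd : d.Nodup) {a : α} (ha : a ∈ c) :
    c.idxOf a = c.countP (fun y => d.idxOf y < d.idxOf a) := by
  induction h with
  | slnil => cases ha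
  | @cons c d b h ih =>
    obtain ⟨hb, hd⟩ := nodup_cons.mp hd
    have hne : ∀ x ∈ c, b ≠ x := fun x hx hbx => hb (hbx ▸ h.subset hx)
    rw [ih hd ha]
    refine countP_congr fun y hy => ?_
    simp [idxOf_cons_ne _ (hne y hy), idxOf_cons_ne _ (hne a ha)]
  | @cons_cons c d b h ih =>
    obtain ⟨hb, hd⟩ := nodup_cons.mp hd
    have hne : ∀ x ∈ c, b ≠ x := fun x hx hbx => hb (hbx ▸ h.subset hx)
    rcases mem_cons.mp ha with rfl | ha
    · simp
    · rw [idxOf_cons_ne _ (hne a ha), idxOf_cons_ne _ (hne a ha), ih hd ha, countP_cons]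
      simp only [idxOf_cons_self, Nat.zero_lt_succ, decide_true, if_pos]
      congr 1
      refine countP_congr fun y hy => ?_
      simp [idxOf_cons_ne _ (hne y hy)]

theorem Sublist.idxOf_head_le {a : α} {t d : List α} (h : a :: t <+ d) (hd : d.Nodup) {y : α}
    (hy : y ∈ a :: t) : d.idxOf a ≤ d.idxOf y := by
  have := h.idxOf_eq_countP hd mem_cons_self
  rw [idxOf_cons_self, eq_comm, countP_eq_zero] at this
  simpa using this y hy

end List

section Step

open List

variable {α : Type*} [DecidableEq α] {τ σ l : List α} {k : ℕ} {s : Bool} {a : α}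

def ddPick (τ l : List α) (k : ℕ) (s : Bool) : Option α :=
  (if s then τ.filter (fun b => decide (b ∈ l.drop k)) else l.drop k).head?

def inversionsAbove (τ σ : List α) (a : α) : ℕ :=
  σ.countP (fun x => σ.idxOf x < σ.idxOf a ∧ τ.idxOf a < τ.idxOf x)

theorem ddStep_eq_of_ddPick_eq_some (h : ddPick τ l k s = some a) :
    ddStep τ l k s =
      let pre := l.take k
      let p := pre.countP (fun b => τ.idxOf b < τ.idxOf a)
      (pre.take p ++ a :: (pre.drop p ++ (l.drop k).erase a), l.idxOf a - p) := by
  unfold ddStep ddPick at *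
  simp only [h, countP_eq_length_filter]

theorem ddStep_fst_eq_append (h : ddPick τ l k s = some a) :
    ∃ front, front ~ a :: l.take k ∧ (ddStep τ l k s).1 = front ++ (l.drop k).erase a := by
  rw [ddStep_eq_of_ddPick_eq_some h]
  refine ⟨_, perm_middle.trans ?_, (append_assoc _ (a :: _) _).symm⟩
  rw [take_append_drop]

theorem exists_ddPick_eq_some (hσ : σ.Nodup) (hστ : σ ~ τ) (hsub : l.drop k <+ σ)
    (hne : l.drop k ≠ []) (s : Bool) :
    ∃ a, ddPick τ l k s = some a ∧ a ∈ l.drop k ∧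
      ∀ y ∈ l.drop k, σ.idxOf y < σ.idxOf a → τ.idxOf a < τ.idxOf y := by
  cases s with
  | false =>
    obtain ⟨a, t, hat⟩ := exists_cons_of_ne_nil hne
    refine ⟨a, by simp [ddPick, hat], by simp [hat], fun y hy hya => ?_⟩
    rw [hat] at hsub hy
    exact absurd (hsub.idxOf_head_le hσ hy) (by omega)
  | true =>
    have hsubτ : ∀ x ∈ l.drop k, x ∈ τ := fun x hx => hστ.subset (hsub.subset hx)
    obtain ⟨x, hx⟩ := exists_mem_of_ne_nil _ hne
    obtain ⟨a, t, hat⟩ := exists_cons_of_ne_nil (ne_nil_of_mem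
      (mem_filter.mpr ⟨hsubτ x hx, decide_eq_true hx⟩ : x ∈ τ.filter (· ∈ l.drop k)))
    have ha : a ∈ l.drop k :=
      of_decide_eq_true (mem_filter.mp (hat ▸ mem_cons_self : a ∈ τ.filter (· ∈ l.drop k))).2
    refine ⟨a, by simp [ddPick, hat], ha, fun y hy hya => ?_⟩
    have hle : τ.idxOf a ≤ τ.idxOf y := (hat ▸ filter_sublist).idxOf_head_le
      (hστ.nodup_iff.mp hσ) (hat ▸ mem_filter.mpr ⟨hsubτ y hy, decide_eq_true hy⟩)
    have hne : τ.idxOf a ≠ τ.idxOf y := fun h => by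
      rw [idxOf_inj (hsubτ a ha)] at h
      subst h; omega
    omega

structure SortInvariant (τ σ l : List α) (k : ℕ) : Prop where
  perm : l ~ σ
  drop_sublist : l.drop k <+ σ
  take_drop : ∀ x ∈ l.take k, ∀ y ∈ l.drop k, τ.idxOf y < τ.idxOf x → σ.idxOf x < σ.idxOf y

theorem ddStep_snd_eq_inversionsAbove (hσ : σ.Nodup) (hστ : σ ~ τ) (hI : SortInvariant τ σ l k)
    (h : ddPick τ l k s = some a) (ha : a ∈ l.drop k)
    (hmin : ∀ y ∈ l.drop k, σ.idxOf y < σ.idxOf a → τ.idxOf a < τ.idxOf y) :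
    (ddStep τ l k s).2 = inversionsAbove τ σ a := by
  rw [ddStep_eq_of_ddPick_eq_some h]
  set pre := l.take k
  set suf := l.drop k
  have hl : pre ++ suf = l := take_append_drop k l
  have hnd : (pre ++ suf).Nodup := hl ▸ hI.perm.nodup_iff.mpr hσ
  have hapre : a ∉ pre := fun h => disjoint_of_nodup_append hnd h ha
  have hpre : pre.length = k := length_take_of_le (by
    have := length_pos_of_mem ha
    rw [length_drop] at this
    omega)
  have hidx : l.idxOf a = k + suf.countP (fun y => σ.idxOf y < σ.idxOf a) := by
    rw [← hl, idxOf_append_of_notMem hapre, hpre, hI.drop_sublist.idxOf_eq_countP hσ ha]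
  have hsplit : pre.countP (fun x => τ.idxOf x < τ.idxOf a) +
      pre.countP (fun x => τ.idxOf a < τ.idxOf x) = k := by
    rw [← hpre, length_eq_countP_add_countP (fun x => τ.idxOf x < τ.idxOf a)]
    congr 1
    refine countP_congr fun x hx => ?_
    have hxa : τ.idxOf x ≠ τ.idxOf a := fun hxa =>
      hapre ((idxOf_inj (hστ.subset (hI.perm.subset (mem_of_mem_take hx)))).mp hxa ▸ hx)
    simp only [decide_eq_true_eq]
    omega
  -- `a` jumps over the prefix alternatives that `τ` ranks below it, which the invariant puts above
  -- it in `σ`, and over the suffix alternatives that `σ` ranks above it, which `hmin` puts below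
  -- it in `τ`: these are exactly the inversions above `a`.
  have hinv : inversionsAbove τ σ a = pre.countP (fun x => τ.idxOf a < τ.idxOf x) +
      suf.countP (fun y => σ.idxOf y < σ.idxOf a) := by
    rw [inversionsAbove, ← hI.perm.countP_eq, ← hl, countP_append]
    congr 1 <;> refine countP_congr fun x hx => ?_ <;> simp only [decide_eq_true_eq]
    · exact ⟨And.right, fun hax => ⟨hI.take_drop x hx a ha hax, hax⟩⟩
    · exact ⟨And.left, fun hxa => ⟨hxa, hmin x hx hxa⟩⟩
  simp only
  omega

theorem SortInvariant.exists_ddStep (hσ : σ.Nodup) (hστ : σ ~ τ) (hI : SortInvariant τ σ l k)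
    (hk : k < σ.length) (s : Bool) :
    ∃ a ∈ l.drop k, (ddStep τ l k s).1.drop (k + 1) = (l.drop k).erase a ∧
      SortInvariant τ σ (ddStep τ l k s).1 (k + 1) ∧
      (ddStep τ l k s).2 = inversionsAbove τ σ a := by
  have hl : l.length = σ.length := hI.perm.length_eq
  obtain ⟨a, h, ha, hmin⟩ :=
    exists_ddPick_eq_some hσ hστ hI.drop_sublist (by rw [Ne, drop_eq_nil_iff]; omega) s
  obtain ⟨front, hfront, heq⟩ := ddStep_fst_eq_append h
  have hlen : front.length = k + 1 := by
    rw [hfront.length_eq, length_cons, length_take_of_le (by omega)]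
  have htake : (ddStep τ l k s).1.take (k + 1) = front := heq ▸ take_left' hlen
  have hdrop : (ddStep τ l k s).1.drop (k + 1) = (l.drop k).erase a := heq ▸ drop_left' hlen
  refine ⟨a, ha, hdrop, ⟨?_, hdrop ▸ erase_sublist.trans hI.drop_sublist, ?_⟩,
    ddStep_snd_eq_inversionsAbove hσ hστ hI h ha hmin⟩
  · rw [heq]
    calc front ++ (l.drop k).erase a ~ a :: (l.take k ++ (l.drop k).erase a) :=
          hfront.append_right _
      _ ~ l.take k ++ l.drop k := perm_middle.symm.trans ((perm_cons_erase ha).symm.append_left _)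
      _ = l := take_append_drop k l
      _ ~ σ := hI.perm
  · rw [htake, hdrop]
    intro x hx y hy hyx
    obtain ⟨hya, hysuf⟩ := (hI.drop_sublist.nodup hσ).mem_erase_iff.mp hy
    rcases mem_cons.mp (hfront.subset hx) with rfl | hx
    · have hyσ : y ∈ σ := hI.drop_sublist.subset hysuf
      have hne : σ.idxOf y ≠ σ.idxOf x := fun e => hya ((idxOf_inj hyσ).mp e)
      by_contra hxy
      have := hmin y hysuf (by omega)
      omega
    · exact hI.take_drop x hx y hysuf hyx

theorem sortInvariant_ddRun (hσ : σ.Nodup) (hστ : σ ~ τ) (s : ℕ → Bool) :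
    ∀ k ≤ σ.length, SortInvariant τ σ (ddRun τ s σ k) k
  | 0, _ => ⟨Perm.refl σ, by simp [ddRun], by simp⟩
  | k + 1, hk => by
    obtain ⟨_, _, _, hI, _⟩ :=
      (sortInvariant_ddRun hσ hστ s k (by omega)).exists_ddStep hσ hστ (by omega) (s k)
    exact hI

def displacements (τ σ : List α) (s : ℕ → Bool) : List ℕ :=
  (range τ.length).map fun k => (ddStep τ (ddRun τ s σ k) k (s k)).2

theorem displacements_perm_map_inversionsAbove (hσ : σ.Nodup) (hστ : σ ~ τ) (s : ℕ → Bool) :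
    displacements τ σ s ~ σ.map (inversionsAbove τ σ) := by
  have key : ∀ k ≤ σ.length, (range k).map (fun k => (ddStep τ (ddRun τ s σ k) k (s k)).2) ++
      ((ddRun τ s σ k).drop k).map (inversionsAbove τ σ) ~ σ.map (inversionsAbove τ σ) := by
    intro k hk
    induction k with
    | zero => simp [ddRun]
    | succ k ih =>
      obtain ⟨a, ha, hdrop, -, hsnd⟩ :=
        (sortInvariant_ddRun hσ hστ s k (by omega)).exists_ddStep hσ hστ (by omega) (s k)
      rw [range_succ, map_append, append_assoc, ddRun, hdrop]
      refine Perm.trans ?_ (ih (by omega))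
      rw [map_singleton, hsnd, singleton_append, ← map_cons]
      exact ((perm_cons_erase ha).symm.map _).append_left _
  have hlen := (sortInvariant_ddRun hσ hστ s σ.length le_rfl).perm.length_eq
  simpa [displacements, hστ.length_eq.symm, drop_eq_nil_of_le hlen.le] using key _ le_rfl

theorem countF_eq_countP_displacements (τ σ : List α) (s : ℕ → Bool) (ℓ : ℕ) :
    countF τ σ s ℓ = (displacements τ σ s).countP (fun d => 0 < ℓ ∧ d = ℓ) := by
  rw [displacements, countP_map, countP_eq_length_filter]
  rfl

end Step

theorem count_function_algorithm_independent_general {α : Type*} [DecidableEq α]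
    (σ τ : List α) (hσ : σ.Nodup) (hperm : σ.Perm τ)
    (s s' : ℕ → Bool) (ℓ : ℕ) :
    countF τ σ s ℓ = countF τ σ s' ℓ := by
  rw [countF_eq_countP_displacements, countF_eq_countP_displacements,
    (displacements_perm_map_inversionsAbove hσ hperm s).countP_eq,
    (displacements_perm_map_inversionsAbove hσ hperm s').countP_eq]

/-- For any two linear orders `σ`, `τ` over the same finite set
of `m` alternatives, and any two sorting algorithms `s, s'` (arbitrary
interleavings of selection-sort and insertion-sort steps), the count function
is the same: the number of drag-and-drop operations moving an alternative up
by exactly `ℓ` positions is independent of the algorithm. -/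
theorem count_function_algorithm_independent {α : Type*} [DecidableEq α]
    (m : ℕ) (σ τ : List α) (hσ : σ.Nodup) (hτ : τ.Nodup) (hperm : σ.Perm τ)
    (hm : σ.length = m) (s s' : ℕ → Bool) (ℓ : ℕ) (hℓ : ℓ ∈ Finset.Icc 1 (m - 1)) :
    countF τ σ s ℓ = countF τ σ s' ℓ :=
  count_function_algorithm_independent_general σ τ hσ hperm s s' ℓ
end

section
/- For any two linear orders σ and τ over m alternatives, the total distance moved by any combination of selection/insertion sort operations, i.e. the weighted sum ∑_{ℓ=1}^{m−1} ℓ · f^{σ→τ}(ℓ), equals the Kendall's Tau distance d_kt(σ, τ). -/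
open Finset in
lemma sum_Icc_mul_card_fiber_eq_sum {n m : ℕ} (d : ℕ → ℕ) (hd : ∀ k < n, d k < m) :
    ∑ ℓ ∈ Icc 1 (m - 1), ℓ * #{k ∈ range n | 0 < ℓ ∧ d k = ℓ} = ∑ k ∈ range n, d k := by
  have hmaps : ∀ k ∈ {k ∈ range n | d k ≠ 0}, d k ∈ Icc 1 (m - 1) := by
    intro k hk
    simp only [mem_filter, mem_range] at hk
    have := hd k hk.1
    simp only [mem_Icc]
    omega
  rw [← sum_filter_ne_zero (s := range n), ← sum_fiberwise_of_maps_to hmaps]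
  refine sum_congr rfl fun ℓ hℓ => ?_
  have hℓ0 : 0 < ℓ := by simp only [mem_Icc] at hℓ; omega
  rw [filter_filter, mul_comm, ← smul_eq_mul, ← sum_const]
  refine sum_congr ?_ fun k hk => (mem_filter.1 hk).2.2.symm
  ext k
  simp only [mem_filter]
  constructor <;> rintro ⟨hk, h⟩ <;> refine ⟨hk, ?_⟩ <;> omega

open List

lemma List.filter_lt_append_filter_le_of_pairwise {α β : Type*} [LinearOrder β] {f : α → β}
    {l : List α} (hl : l.Pairwise fun x y => f x ≤ f y) (b : β) :
    l.filter (fun x => f x < b) ++ l.filter (fun x => b ≤ f x) = l := by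
  induction l with
  | nil => rfl
  | cons c t ih =>
    obtain ⟨hc, ht⟩ := pairwise_cons.1 hl
    by_cases hcb : f c < b
    · simp [hcb, ih ht]
    · have hb : ∀ y ∈ c :: t, b ≤ f y := by
        simpa [not_lt.1 hcb] using fun y hy => (not_lt.1 hcb).trans (hc y hy)
      rw [filter_eq_nil_iff.2 fun y hy => by simpa using hb y hy,
        filter_eq_self.2 fun y hy => by simpa using hb y hy, nil_append]

section InversionCount

variable {α β : Type*} [LinearOrder β] (f : α → β)

def invCount : List α → ℕ
  | [] => 0
  | b :: t => t.countP (fun c => f c < f b) + invCount t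

def crossCount (X M : List α) : ℕ :=
  (X.map fun b => M.countP (fun c => f c < f b)).sum

lemma crossCount_append_right (X M N : List α) :
    crossCount f X (M ++ N) = crossCount f X M + crossCount f X N := by
  simp only [crossCount, countP_append, sum_map_add]

lemma crossCount_perm_right {X M N : List α} (h : M ~ N) :
    crossCount f X M = crossCount f X N := by
  simp only [crossCount, h.countP_eq]

lemma crossCount_singleton_right (X : List α) (a : α) :
    crossCount f X [a] = X.countP (fun b => f a < f b) := by
  induction X with
  | nil => rfl
  | cons b t ih => by_cases h : f a < f b <;> simp_all [crossCount, countP_cons, add_comm]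

lemma invCount_append (X M : List α) :
    invCount f (X ++ M) = invCount f X + crossCount f X M + invCount f M := by
  induction X with
  | nil => simp [invCount, crossCount]
  | cons b t ih =>
    simp only [cons_append, invCount, ih, countP_append, crossCount, map_cons, sum_cons]
    omega

lemma invCount_eq_zero_of_pairwise {l : List α} (h : l.Pairwise fun x y => f x ≤ f y) :
    invCount f l = 0 := by
  induction l with
  | nil => rfl
  | cons b t ih =>
    rw [pairwise_cons] at h
    simpa [invCount, ih h.2, countP_eq_zero] using h.1

lemma invCount_move (X Y Z : List α) (a : α) (h : ∀ y ∈ Y, f a < f y) :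
    invCount f (X ++ a :: (Y ++ Z)) + Y.length = invCount f (X ++ Y ++ a :: Z) := by
  have hcross : crossCount f X (a :: (Y ++ Z)) = crossCount f X (Y ++ a :: Z) :=
    crossCount_perm_right f perm_middle.symm
  have haY : Y.countP (fun c => f c < f a) = 0 :=
    countP_eq_zero.2 fun y hy => by simpa using (h y hy).le
  have hYa : crossCount f Y [a] = Y.length := by
    rw [crossCount_singleton_right, countP_eq_length]
    simpa using h
  have hmove : invCount f (a :: (Y ++ Z)) + Y.length = invCount f (Y ++ a :: Z) := by
    rw [invCount_append f Y, ← singleton_append (x := a) (l := Z), crossCount_append_right, hYa]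
    simp only [singleton_append, invCount, countP_append, haY, invCount_append f Y Z]
    omega
  rw [append_assoc, invCount_append, invCount_append f X, hcross, ← hmove]
  omega

end InversionCount

section DecidableEq

variable {α : Type*} [DecidableEq α]

lemma List.Nodup.pairwise_idxOf_lt {τ : List α} (hτ : τ.Nodup) :
    τ.Pairwise fun x y => τ.idxOf x < τ.idxOf y := by
  rw [pairwise_iff_getElem]
  intro i j hi hj hij
  rwa [hτ.idxOf_getElem i hi, hτ.idxOf_getElem j hj]

lemma kendall_eq_sum (σ τ : List α) :
    kendall σ τ = ∑ x ∈ σ.toFinset, ∑ y ∈ σ.toFinset,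
      if σ.idxOf x < σ.idxOf y ∧ τ.idxOf y < τ.idxOf x then 1 else 0 := by
  rw [kendall, Finset.card_filter, Finset.sum_product]

lemma kendall_cons (τ : List α) {b : α} {t : List α} (h : (b :: t).Nodup) :
    kendall (b :: t) τ = t.countP (fun c => τ.idxOf c < τ.idxOf b) + kendall t τ := by
  obtain ⟨hbt, ht⟩ := nodup_cons.1 h
  have hbT : b ∉ t.toFinset := by simpa using hbt
  have hidx : ∀ x ∈ t.toFinset, (b :: t).idxOf x = t.idxOf x + 1 := fun x hx =>
    idxOf_cons_ne t fun e => hbt (e ▸ mem_toFinset.1 hx)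
  have hrow_b : (∑ y ∈ insert b t.toFinset,
      if (b :: t).idxOf b < (b :: t).idxOf y ∧ τ.idxOf y < τ.idxOf b then 1 else 0) =
      t.countP (fun c => τ.idxOf c < τ.idxOf b) := by
    rw [Finset.sum_insert hbT, idxOf_cons_self, if_neg (by simp), zero_add,
      Finset.sum_congr rfl fun y hy => by rw [hidx y hy], ← Finset.card_filter]
    simp only [Nat.succ_pos, true_and]
    exact ht.card_eq_countP
  have hrow : ∀ x ∈ t.toFinset, (∑ y ∈ insert b t.toFinset,
      if (b :: t).idxOf x < (b :: t).idxOf y ∧ τ.idxOf y < τ.idxOf x then 1 else 0) =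
      ∑ y ∈ t.toFinset, if t.idxOf x < t.idxOf y ∧ τ.idxOf y < τ.idxOf x then 1 else 0 := by
    intro x hx
    rw [Finset.sum_insert hbT, idxOf_cons_self, hidx x hx, if_neg (by simp), zero_add]
    exact Finset.sum_congr rfl fun y hy => by simp [hidx y hy]
  rw [kendall_eq_sum, kendall_eq_sum t, toFinset_cons, Finset.sum_insert hbT, hrow_b,
    Finset.sum_congr rfl hrow]

lemma kendall_eq_invCount (τ : List α) {σ : List α} (hσ : σ.Nodup) :
    kendall σ τ = invCount τ.idxOf σ := by
  induction σ with
  | nil => rfl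
  | cons b t ih => rw [kendall_cons τ hσ, invCount, ih hσ.of_cons]

lemma exists_ddStep_pick {τ l : List α} {k : ℕ} (s : Bool) (hτ : τ.Nodup) (hl : l ~ τ)
    (hk : k < l.length) :
    ∃ a W Z, (if s then τ.filter (fun b => decide (b ∈ l.drop k)) else l.drop k).head? = some a ∧
      l.drop k = W ++ a :: Z ∧ ∀ w ∈ W, τ.idxOf a < τ.idxOf w := by
  obtain ⟨b, t, hbt⟩ := exists_cons_of_length_pos (by simpa using hk : 0 < (l.drop k).length)
  cases s with
  | false => exact ⟨b, [], t, by simp [hbt], hbt, by simp⟩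
  | true =>
    have hmem : ∀ x ∈ l.drop k, x ∈ τ.filter (fun b => decide (b ∈ l.drop k)) := fun x hx =>
      mem_filter.2 ⟨hl.subset (mem_of_mem_drop hx), by simpa using hx⟩
    obtain ⟨a, F, hF⟩ := exists_cons_of_ne_nil (ne_nil_of_mem (hmem b (by simp [hbt])))
    have ha : a ∈ l.drop k := by
      have : a ∈ τ.filter (fun b => decide (b ∈ l.drop k)) := hF ▸ mem_cons_self
      simpa using (mem_filter.1 this).2
    obtain ⟨W, Z, hWZ⟩ := append_of_mem ha
    refine ⟨a, W, Z, by simp [hF], hWZ, fun w hwW => ?_⟩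
    have hsorted := hτ.pairwise_idxOf_lt.sublist
      (filter_sublist (p := fun b => decide (b ∈ l.drop k)))
    rw [hF, pairwise_cons] at hsorted
    have hw : w ∈ l.drop k := hWZ ▸ mem_append_left _ hwW
    have hwa : w ≠ a := by
      have hnd := (hl.nodup_iff.2 hτ).sublist (drop_sublist k l)
      rw [hWZ] at hnd
      exact (nodup_append.1 hnd).2.2 w hwW a mem_cons_self
    exact hsorted.1 w ((mem_cons.1 (hF ▸ hmem w hw)).resolve_left hwa)

lemma ddStep_eq_of_pick {τ l W Z : List α} {k : ℕ} {s : Bool} {a : α} (hl : l.Nodup)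
    (hpick : (if s then τ.filter (fun b => decide (b ∈ l.drop k)) else l.drop k).head? = some a)
    (hdrop : l.drop k = W ++ a :: Z)
    (hsort : (l.take k).Pairwise fun x y => τ.idxOf x < τ.idxOf y) :
    ddStep τ l k s =
      ((l.take k).filter (fun c => τ.idxOf c < τ.idxOf a) ++
        a :: ((l.take k).filter (fun c => τ.idxOf a ≤ τ.idxOf c) ++ (W ++ Z)),
      ((l.take k).filter (fun c => τ.idxOf a ≤ τ.idxOf c)).length + W.length) := by
  unfold ddStep
  rw [hpick]
  dsimp only
  set pre := l.take k
  set X := pre.filter (fun c => τ.idxOf c < τ.idxOf a)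
  set Y := pre.filter (fun c => τ.idxOf a ≤ τ.idxOf c)
  have hsplit : X ++ Y = pre := filter_lt_append_filter_le_of_pairwise (hsort.imp le_of_lt) _
  have hl' : l = pre ++ (W ++ a :: Z) := by rw [← hdrop, take_append_drop]
  have ha : a ∉ pre ++ W := by
    rw [hl', ← append_assoc] at hl
    exact fun h => (nodup_append.1 hl).2.2 a h a mem_cons_self rfl
  have htake : pre.take X.length = X := by
    simpa only [hsplit] using take_left (l₁ := X) (l₂ := Y)
  have hdrop' : pre.drop X.length = Y := by
    simpa only [hsplit] using drop_left (l₁ := X) (l₂ := Y)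
  have hidx : l.idxOf a = X.length + Y.length + W.length := by
    rw [hl', ← append_assoc, idxOf_append_of_notMem ha, idxOf_cons_self, length_append,
      ← hsplit, length_append]
    rfl
  simp only [htake, hdrop', hdrop, erase_append_right _ (fun h => ha (mem_append_right _ h)),
    erase_cons_head, hidx]
  congr 1
  omega

lemma ddStep_spec {τ l : List α} {k : ℕ} (s : Bool) (hτ : τ.Nodup) (hl : l ~ τ)
    (hsort : (l.take k).Pairwise fun x y => τ.idxOf x < τ.idxOf y) (hk : k < l.length) :
    (ddStep τ l k s).1 ~ l ∧
      ((ddStep τ l k s).1.take (k + 1)).Pairwise (fun x y => τ.idxOf x < τ.idxOf y) ∧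
      invCount τ.idxOf (ddStep τ l k s).1 + (ddStep τ l k s).2 = invCount τ.idxOf l ∧
      (ddStep τ l k s).2 < l.length := by
  obtain ⟨a, W, Z, hpick, hdrop, hW⟩ := exists_ddStep_pick s hτ hl hk
  have hnd := hl.nodup_iff.2 hτ
  rw [ddStep_eq_of_pick hnd hpick hdrop hsort]
  set pre := l.take k
  set X := pre.filter (fun c => τ.idxOf c < τ.idxOf a)
  set Y := pre.filter (fun c => τ.idxOf a ≤ τ.idxOf c)
  have hsplit : X ++ Y = pre := filter_lt_append_filter_le_of_pairwise (hsort.imp le_of_lt) _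
  have hl' : l = X ++ (Y ++ W) ++ a :: Z := by
    rw [append_assoc, append_assoc, ← append_assoc X, hsplit, ← hdrop, take_append_drop]
  have hXa : ∀ x ∈ X, τ.idxOf x < τ.idxOf a := fun x hx => by simpa using (mem_filter.1 hx).2
  have ha : a ∉ X ++ (Y ++ W) := by
    rw [hl'] at hnd
    exact fun h => (nodup_append.1 hnd).2.2 a h a mem_cons_self rfl
  have hYW : ∀ y ∈ Y ++ W, τ.idxOf a < τ.idxOf y := by
    intro y hy
    rcases mem_append.1 hy with hyY | hyW
    · have hya : y ≠ a := fun h => ha (mem_append_right _ (mem_append_left _ (h ▸ hyY)))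
      have hyτ : y ∈ τ := hl.subset (mem_of_mem_take (mem_of_mem_filter hyY))
      exact lt_of_le_of_ne (by simpa using (mem_filter.1 hyY).2)
        fun h => hya ((idxOf_inj hyτ).1 h.symm)
    · exact hW y hyW
  have hlen : X.length + Y.length = k := by
    rw [← length_append, hsplit, length_take_of_le hk.le]
  refine ⟨?_, ?_, ?_, ?_⟩
  · rw [hl']
    simpa only [append_assoc] using
      (perm_middle (a := a) (l₁ := Y ++ W) (l₂ := Z)).symm.append_left X
  · have hprefix : (X ++ a :: (Y ++ (W ++ Z))).take (k + 1) = X ++ a :: Y := by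
      rw [← cons_append, ← append_assoc]
      exact take_left' (by simp only [length_append, length_cons]; omega)
    obtain ⟨hXs, hYs, hXY⟩ := pairwise_append.1 (hsplit ▸ hsort)
    rw [hprefix, pairwise_append, pairwise_cons]
    refine ⟨hXs, ⟨fun y hy => hYW y (mem_append_left _ hy), hYs⟩, fun x hx z hz => ?_⟩
    rcases mem_cons.1 hz with rfl | hzY
    · exact hXa x hx
    · exact hXY x hx z hzY
  · rw [hl', ← invCount_move _ X (Y ++ W) Z a hYW]
    simp
  · rw [hl']
    simp only [length_append, length_cons]
    omega

lemma ddRun_spec {τ σ : List α} (s : ℕ → Bool) (hτ : τ.Nodup) (hσ : σ ~ τ) {k : ℕ}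
    (hk : k ≤ σ.length) :
    ddRun τ s σ k ~ τ ∧
      ((ddRun τ s σ k).take k).Pairwise (fun x y => τ.idxOf x < τ.idxOf y) ∧
      invCount τ.idxOf (ddRun τ s σ k) +
        ∑ j ∈ Finset.range k, (ddStep τ (ddRun τ s σ j) j (s j)).2 = invCount τ.idxOf σ := by
  induction k with
  | zero => simpa [ddRun] using hσ
  | succ k ih =>
    obtain ⟨hperm, hsort, hinv⟩ := ih (by omega)
    have hk' : k < (ddRun τ s σ k).length := by rw [hperm.length_eq, ← hσ.length_eq]; omega
    obtain ⟨hperm', hsort', hinv', -⟩ := ddStep_spec (s k) hτ hperm hsort hk'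
    refine ⟨hperm'.trans hperm, hsort', ?_⟩
    rw [Finset.sum_range_succ, ← hinv, ddRun, ← hinv']
    ring

lemma ddStep_snd_lt_length {τ σ : List α} (s : ℕ → Bool) (hτ : τ.Nodup) (hσ : σ ~ τ) :
    ∀ j < σ.length, (ddStep τ (ddRun τ s σ j) j (s j)).2 < σ.length := by
  intro j hj
  obtain ⟨hperm, hsort, -⟩ := ddRun_spec s hτ hσ hj.le
  have hlen : (ddRun τ s σ j).length = σ.length := hperm.length_eq.trans hσ.length_eq.symm
  simpa [hlen] using (ddStep_spec (s j) hτ hperm hsort (hlen ▸ hj)).2.2.2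

lemma sum_ddStep_snd_eq_invCount {τ σ : List α} (s : ℕ → Bool) (hτ : τ.Nodup) (hσ : σ ~ τ) :
    ∑ j ∈ Finset.range σ.length, (ddStep τ (ddRun τ s σ j) j (s j)).2 =
      invCount τ.idxOf σ := by
  obtain ⟨hperm, hsort, hinv⟩ := ddRun_spec s hτ hσ le_rfl
  rw [take_of_length_le (hperm.length_eq.trans hσ.length_eq.symm).le] at hsort
  rwa [invCount_eq_zero_of_pairwise _ (hsort.imp le_of_lt), zero_add] at hinv

end DecidableEq

/-- For any two linear orders `σ`, `τ` over `m` alternatives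
and any interleaving `s` of selection/insertion sort steps, the total distance
moved, `∑_{ℓ=1}^{m-1} ℓ · f^{σ→τ}(ℓ)`, equals the Kendall's Tau distance
`d_kt(σ, τ)`. -/
theorem total_distance_eq_kendall {α : Type*} [DecidableEq α]
    (m : ℕ) (σ τ : List α) (hσ : σ.Nodup) (hτ : τ.Nodup) (hperm : σ.Perm τ)
    (hm : σ.length = m) (s : ℕ → Bool) :
    ∑ ℓ ∈ Finset.Icc 1 (m - 1), ℓ * countF τ σ s ℓ = kendall σ τ := by
  subst hm
  rw [kendall_eq_invCount τ hσ, ← sum_ddStep_snd_eq_invCount s hτ hperm]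
  simp only [countF, ← hperm.length_eq]
  exact sum_Icc_mul_card_fiber_eq_sum _ (ddStep_snd_lt_length s hτ hperm)
end

section
/- For the single Plackett-Luce model with parameters θ, any linear order σ* consistent with θ (i.e., a_i ≻_{σ*} a_j whenever θ_i > θ_j, ties broken by index) minimizes the expected Kendall's Tau distance E_{τ∼θ}[d_kt(σ, τ)] over all linear orders σ. -/
open Finset

/-- Kendall's Tau distance between two rankings of `m` alternatives.
A ranking is a permutation `σ` of `Fin m`, where `σ i` is the rank (position)
of alternative `i`, so `a_i ≻_σ a_j` iff `σ i < σ j`. `ktDist σ τ` is the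
number of ordered pairs `(i, j)` with `a_i ≻_σ a_j` and `a_j ≻_τ a_i`. -/
def ktDist {m : ℕ} (σ τ : Equiv.Perm (Fin m)) : ℕ :=
  (Finset.univ.filter (fun p : Fin m × Fin m => σ p.1 < σ p.2 ∧ τ p.2 < τ p.1)).card

/-- The probability assigned by the Plackett–Luce model with parameters `θ`
to the ranking `σ` (where `σ i` is the rank of alternative `i`): at each
position `k`, the alternative placed there (namely `σ.symm k`) is chosen
among the remaining alternatives with probability proportional to its
parameter. -/
noncomputable def PLprob {m : ℕ} (θ : Fin m → ℝ) (σ : Equiv.Perm (Fin m)) : ℝ :=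
  ∏ k : Fin m, θ (σ.symm k) / ∑ i ∈ Finset.univ.filter (fun i => k ≤ σ i), θ i

/-!
The expected Kendall distance from `σ` splits over pairs: it is the sum, over the pairs `x`
ranked ahead of `y` by `σ`, of the probability that the model ranks `y` ahead of `x`. So it
suffices that `σ*` orients every pair the cheaper way, i.e. that `θ j ≤ θ i` makes
`Pr(j ≻ i) ≤ Pr(i ≻ j)`. No marginals need to be computed for this: composing a ranking `τ`
with `i ≻_τ j` with the transposition `(i j)` keeps the numerator `∏ θ` of its Plackett–Luce
probability and can only enlarge the tail sums in its denominator.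
-/

open Equiv

noncomputable def PLtailWeight {m : ℕ} (θ : Fin m → ℝ) (τ : Perm (Fin m)) (k : Fin m) : ℝ :=
  ∑ i ∈ univ.filter (fun i => k ≤ τ i), θ i

lemma PLprob_eq_prod_div {m : ℕ} (θ : Fin m → ℝ) (τ : Perm (Fin m)) :
    PLprob θ τ = (∏ i, θ i) / ∏ k, PLtailWeight θ τ k := by
  rw [PLprob, prod_div_distrib, Equiv.prod_comp τ.symm θ]
  rfl

lemma PLtailWeight_pos {m : ℕ} {θ : Fin m → ℝ} (hθ : ∀ i, 0 < θ i) (τ : Perm (Fin m))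
    (k : Fin m) : 0 < PLtailWeight θ τ k :=
  sum_pos (fun i _ => hθ i) ⟨τ.symm k, by simp⟩

lemma PLtailWeight_le_mul_swap {m : ℕ} (θ : Fin m → ℝ) (τ : Perm (Fin m)) {i j : Fin m}
    (hθij : θ j ≤ θ i) (hτ : τ i < τ j) (k : Fin m) :
    PLtailWeight θ τ k ≤ PLtailWeight θ (τ * swap i j) k := by
  have hij : i ≠ j := fun h => hτ.ne (congrArg τ h)
  have hswap : PLtailWeight θ (τ * swap i j) k
      = ∑ x, if k ≤ τ x then θ (swap i j x) else 0 := by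
    rw [PLtailWeight, sum_filter, ← Equiv.sum_comp (swap i j)]
    simp
  have hdiff : PLtailWeight θ (τ * swap i j) k - PLtailWeight θ τ k
      = (if k ≤ τ i then θ j - θ i else 0) + (if k ≤ τ j then θ i - θ j else 0) := by
    rw [hswap, PLtailWeight, sum_filter, ← sum_sub_distrib, Fintype.sum_eq_add i j hij]
    · simp [ite_sub_ite]
    · rintro x ⟨hxi, hxj⟩
      simp [swap_apply_of_ne_of_ne hxi hxj]
  have hτ_tail : k ≤ τ i → k ≤ τ j := fun h => h.trans hτ.le
  split_ifs at hdiff <;> grind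

lemma PLprob_mul_swap_le {m : ℕ} {θ : Fin m → ℝ} (hθ : ∀ i, 0 < θ i) (τ : Perm (Fin m))
    {i j : Fin m} (hθij : θ j ≤ θ i) (hτ : τ i < τ j) :
    PLprob θ (τ * swap i j) ≤ PLprob θ τ := by
  rw [PLprob_eq_prod_div, PLprob_eq_prod_div]
  exact div_le_div_of_nonneg_left (prod_pos fun i _ => hθ i).le
    (prod_pos fun k _ => PLtailWeight_pos hθ τ k)
    (prod_le_prod (fun k _ => (PLtailWeight_pos hθ τ k).le)
      fun k _ => PLtailWeight_le_mul_swap θ τ hθij hτ k)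

noncomputable def PLprecedeProb {m : ℕ} (θ : Fin m → ℝ) (x y : Fin m) : ℝ :=
  ∑ τ ∈ univ.filter (fun τ : Perm (Fin m) => τ x < τ y), PLprob θ τ

lemma PLprecedeProb_le {m : ℕ} {θ : Fin m → ℝ} (hθ : ∀ i, 0 < θ i) {i j : Fin m}
    (hθij : θ j ≤ θ i) : PLprecedeProb θ j i ≤ PLprecedeProb θ i j := by
  rw [PLprecedeProb, PLprecedeProb, sum_filter, sum_filter,
    ← Equiv.sum_comp (Equiv.mulRight (swap i j))]
  refine sum_le_sum fun τ _ => ?_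
  simp only [Equiv.coe_mulRight, Perm.mul_apply, swap_apply_left, swap_apply_right]
  split_ifs with hτ
  · exact PLprob_mul_swap_le hθ τ hθij hτ
  · exact le_rfl

section RankingCost

variable {α β : Type*} [Fintype α] [LinearOrder β]

/-- `q y x` is the cost of ranking `x` ahead of `y`. -/
def rankingCost (q : α → α → ℝ) (s : α → β) : ℝ :=
  ∑ p : α × α, if s p.1 < s p.2 then q p.2 p.1 else 0

lemma two_mul_rankingCost (q : α → α → ℝ) (s : α → β) :
    2 * rankingCost q s = ∑ p : α × α,
      ((if s p.1 < s p.2 then q p.2 p.1 else 0) + if s p.2 < s p.1 then q p.1 p.2 else 0) := by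
  rw [sum_add_distrib, two_mul, rankingCost]
  congr 1
  exact (Equiv.sum_comp (Equiv.prodComm α α) _).symm

lemma rankingCost_le_of_forall_lt_imp_le {q : α → α → ℝ} {s t : α → β} (hs : s.Injective)
    (ht : t.Injective) (hq : ∀ x y, s x < s y → q y x ≤ q x y) :
    rankingCost q s ≤ rankingCost q t := by
  refine le_of_mul_le_mul_left ?_ two_pos
  rw [two_mul_rankingCost, two_mul_rankingCost]
  refine sum_le_sum fun ⟨x, y⟩ _ => ?_
  rcases eq_or_ne x y with rfl | hxy
  · simp
  have hsxy := hs.ne hxy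
  have htxy := ht.ne hxy
  have hqxy := hq x y
  have hqyx := hq y x
  dsimp only
  split_ifs <;> grind

end RankingCost

lemma sum_PLprob_mul_ktDist {m : ℕ} (θ : Fin m → ℝ) (σ : Perm (Fin m)) :
    ∑ τ, PLprob θ τ * (ktDist σ τ : ℝ) = rankingCost (PLprecedeProb θ) σ := by
  simp only [ktDist, card_filter, Nat.cast_sum, Nat.cast_ite, Nat.cast_one, Nat.cast_zero,
    mul_sum, mul_ite, mul_one, mul_zero, ite_and]
  rw [sum_comm, rankingCost]
  refine sum_congr rfl fun p _ => ?_
  split_ifs <;> simp [PLprecedeProb, sum_filter]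

/-- For the single Plackett–Luce model with positive
parameters `θ`, any linear order `σ*` consistent with `θ` (i.e., `a_i ≻_{σ*} a_j`
whenever `θ_i > θ_j`, ties broken by index) minimizes the expected Kendall's
Tau distance `E_{τ∼θ}[d_kt(σ, τ)]` over all linear orders `σ`. -/
theorem PL_consistent_order_minimizes {m : ℕ} (θ : Fin m → ℝ) (hθ : ∀ i, 0 < θ i)
    (σstar : Equiv.Perm (Fin m))
    (hcons : ∀ i j : Fin m, (θ j < θ i ∨ (θ i = θ j ∧ i < j)) → σstar i < σstar j)
    (σ : Equiv.Perm (Fin m)) :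
    ∑ τ : Equiv.Perm (Fin m), PLprob θ τ * (ktDist σstar τ : ℝ)
      ≤ ∑ τ : Equiv.Perm (Fin m), PLprob θ τ * (ktDist σ τ : ℝ) := by
  have hσstar : ∀ x y, σstar x < σstar y → θ y ≤ θ x := fun x y h =>
    not_lt.1 fun hlt => (hcons y x (Or.inl hlt)).asymm h
  rw [sum_PLprob_mul_ktDist, sum_PLprob_mul_ktDist]
  exact rankingCost_le_of_forall_lt_imp_le σstar.injective σ.injective
    fun x y h => PLprecedeProb_le hθ (hσstar x y h)
end

section
/- In the Mallows model with reference ranking σ* and dispersion φ ∈ (0,1], for any integer Δ ≥ 1 the quantity g(Δ) = (∑_{z=1}^{Δ} z φ^{z−1}) / ((∑_{z=0}^{Δ−1} φ^z)(∑_{z=0}^{Δ} φ^z)) satisfies g(Δ) ≥ 1/2. -/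
open Finset

lemma geom_sum_le_of_le_one {x : ℝ} (hx0 : 0 ≤ x) (hx1 : x ≤ 1) (n : ℕ) :
    ∑ i ∈ range n, x ^ i ≤ n := by
  simpa using sum_le_card_nsmul (range n) (x ^ ·) 1 fun _ _ ↦ pow_le_one₀ hx0 hx1

/-- With `S m = ∑ i < m, x ^ i`, passing from `n` to `n + 1` raises the left side by
`S (n + 1) * (x ^ n + x ^ (n + 1))` and the right side by `2 (n + 1) x ^ n`; the former is the
smaller since `S (n + 1) ≤ n + 1` and `x ^ (n + 1) ≤ x ^ n`. -/
lemma geom_sum_mul_geom_sum_succ_le {x : ℝ} (hx0 : 0 ≤ x) (hx1 : x ≤ 1) (n : ℕ) :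
    (∑ i ∈ range n, x ^ i) * ∑ i ∈ range (n + 1), x ^ i ≤
      2 * ∑ i ∈ Icc 1 n, (i : ℝ) * x ^ (i - 1) := by
  induction n with
  | zero => simp
  | succ n ih =>
    have hstep : (∑ i ∈ range (n + 1), x ^ i) * (x ^ n + x ^ (n + 1)) ≤ (n + 1) * (2 * x ^ n) := by
      gcongr
      · exact_mod_cast geom_sum_le_of_le_one hx0 hx1 (n + 1)
      · linarith [pow_le_pow_of_le_one hx0 hx1 (Nat.le_add_right n 1)]
    rw [sum_Icc_succ_top (by omega), sum_range_succ _ (n + 1), sum_range_succ _ n] at *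
    push_cast
    linear_combination ih + hstep

/-- In the Mallows model with dispersion `φ ∈ (0,1]`, for any
integer `Δ ≥ 1` the pairwise marginal quantity
`g(Δ) = (∑_{z=1}^{Δ} z φ^{z-1}) / ((∑_{z=0}^{Δ-1} φ^z)(∑_{z=0}^{Δ} φ^z))`
satisfies `g(Δ) ≥ 1/2`. -/
theorem mallows_marginal_ge_half (φ : ℝ) (hφ0 : 0 < φ) (hφ1 : φ ≤ 1)
    (Δ : ℕ) (hΔ : 1 ≤ Δ) :
    (1 : ℝ) / 2 ≤
      (∑ z ∈ Finset.Icc 1 Δ, (z : ℝ) * φ ^ (z - 1)) /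
        ((∑ z ∈ Finset.range Δ, φ ^ z) * (∑ z ∈ Finset.range (Δ + 1), φ ^ z)) := by
  have hden : 0 < (∑ z ∈ range Δ, φ ^ z) * ∑ z ∈ range (Δ + 1), φ ^ z :=
    mul_pos (geom_sum_pos hφ0.le (by omega)) (geom_sum_pos hφ0.le (by omega))
  rw [le_div_iff₀ hden]
  linarith [geom_sum_mul_geom_sum_succ_le hφ0.le hφ1 Δ]
end

section
/- Under the Mallows model with reference ranking σ* and dispersion φ ∈ (0,1], the reference ranking σ* minimizes the expected Kendall's Tau distance: for all linear orders σ, E_{τ∼(σ*,φ)}[d_kt(σ*, τ)] ≤ E_{τ∼(σ*,φ)}[d_kt(σ, τ)]. -/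
open Finset

/-- The probability assigned by the Mallows model with reference ranking
`σstar` and dispersion `φ` to the ranking `τ`:
`Pr(τ) = φ^{d_kt(τ, σ*)} / Z` with `Z = ∑_{τ'} φ^{d_kt(τ', σ*)}`. -/
noncomputable def MMprob {m : ℕ} (φ : ℝ) (σstar τ : Equiv.Perm (Fin m)) : ℝ :=
  φ ^ ktDist τ σstar / ∑ τ' : Equiv.Perm (Fin m), φ ^ ktDist τ' σstar


private lemma four_ind (ti tj tk si sj sk : ℕ) (hτ : tj < ti) (hσ : si < sj) :
    ((if tk < ti ∧ sj < sk then 1 else 0) + (if tk < tj ∧ si < sk then 1 else 0)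
      + (if ti < tk ∧ sk < sj then 1 else 0) + (if tj < tk ∧ sk < si then 1 else 0) : ℕ)
    ≤ (if tk < ti ∧ si < sk then 1 else 0) + (if tk < tj ∧ sj < sk then 1 else 0)
      + (if ti < tk ∧ sk < si then 1 else 0) + (if tj < tk ∧ sk < sj then 1 else 0) := by
  split_ifs <;> omega

private lemma sum_le_blocks {m : ℕ} (i j : Fin m) (hij : i ≠ j) (F G : Fin m → Fin m → ℕ)
    (h1 : ∀ a ∈ (univ.erase i).erase j, ∀ b ∈ (univ.erase i).erase j, F a b = G a b)
    (h2 : ∀ k ∈ (univ.erase i).erase j,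
      F k i + F k j + F i k + F j k ≤ G k i + G k j + G i k + G j k)
    (h3 : F i i + F i j + F j i + F j j ≤ G i i + G i j + G j i + G j j) :
    ∑ a, ∑ b, F a b ≤ ∑ a, ∑ b, G a b := by
  set T := (univ.erase i).erase j with hT
  have hjT : j ∈ univ.erase i := by simp [Ne.symm hij]
  have split : ∀ H : Fin m → ℕ, ∑ a, H a = ∑ a ∈ T, H a + H j + H i := by
    intro H
    rw [← Finset.sum_erase_add univ H (mem_univ i), ← Finset.sum_erase_add _ H hjT]
  have eF : ∀ F : Fin m → Fin m → ℕ, ∑ a, ∑ b, F a b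
      = ((∑ a ∈ T, ∑ b ∈ T, F a b)
        + (∑ k ∈ T, (F k i + F k j + F i k + F j k)))
        + (F i i + F i j + F j i + F j j) := by
    intro F
    rw [split (fun a => ∑ b, F a b)]
    simp only [split]
    rw [Finset.sum_add_distrib, Finset.sum_add_distrib]
    simp only [Finset.sum_add_distrib]
    ring
  rw [eF F, eF G]
  have b1 : ∑ a ∈ T, ∑ b ∈ T, F a b = ∑ a ∈ T, ∑ b ∈ T, G a b :=
    Finset.sum_congr rfl fun a ha => Finset.sum_congr rfl fun b hb => h1 a ha b hb
  have b2 : ∑ k ∈ T, (F k i + F k j + F i k + F j k) ≤ ∑ k ∈ T, (G k i + G k j + G i k + G j k) :=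
    Finset.sum_le_sum h2
  omega

private lemma kt_swap_le {m : ℕ} (σstar τ : Equiv.Perm (Fin m)) (i j : Fin m)
    (hσ : σstar i < σstar j) (hτ : τ j < τ i) :
    ktDist ((Equiv.swap i j).trans τ) σstar ≤ ktDist τ σstar := by
  have hij : i ≠ j := fun h => absurd hσ (by simp [h])
  set s := Equiv.swap i j with hs
  set F : Fin m → Fin m → ℕ :=
      fun a b => if τ a < τ b ∧ σstar (s b) < σstar (s a) then 1 else 0 with hF
  set G : Fin m → Fin m → ℕ :=
      fun a b => if τ a < τ b ∧ σstar b < σstar a then 1 else 0 with hG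
  have hcardG : ktDist τ σstar = ∑ a, ∑ b, G a b := by
    rw [ktDist, Finset.card_filter, Fintype.sum_prod_type]
  have hcardF : ktDist (s.trans τ) σstar = ∑ a, ∑ b, F a b := by
    rw [ktDist, Finset.card_filter, Fintype.sum_prod_type]
    calc ∑ a, ∑ b, (if (s.trans τ) a < (s.trans τ) b ∧ σstar b < σstar a then 1 else 0)
        = ∑ a, ∑ b, F (s a) (s b) := by
          refine Finset.sum_congr rfl fun a _ => Finset.sum_congr rfl fun b _ => ?_
          simp [hF, Equiv.swap_apply_self, hs]
      _ = ∑ a, ∑ b, F (s a) b := by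
          exact Finset.sum_congr rfl fun a _ => Equiv.sum_comp s (F (s a))
      _ = ∑ a, ∑ b, F a b := Equiv.sum_comp s (fun a => ∑ b, F a b)
  rw [hcardF, hcardG]
  refine sum_le_blocks i j hij F G ?_ ?_ ?_
  · intro a ha b hb
    simp only [mem_erase] at ha hb
    rw [hF, hG]
    simp only [hs, Equiv.swap_apply_of_ne_of_ne ha.2.1 ha.1, Equiv.swap_apply_of_ne_of_ne hb.2.1 hb.1]
  · intro k hk
    simp only [mem_erase] at hk
    have hki : k ≠ i := hk.2.1
    have hkj : k ≠ j := hk.1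
    simp only [hF, hG, hs, Equiv.swap_apply_left, Equiv.swap_apply_right,
      Equiv.swap_apply_of_ne_of_ne hki hkj, Fin.lt_def]
    exact four_ind _ _ _ _ _ _ hτ hσ
  · have h1 : ¬ τ i < τ j := lt_asymm hτ
    have h2 : ¬ σstar j < σstar i := lt_asymm hσ
    simp [hF, hG, hs, Equiv.swap_apply_left, Equiv.swap_apply_right, h1, h2]

private lemma disc_le_conc {m : ℕ} (φ : ℝ) (hφ0 : 0 < φ) (hφ1 : φ ≤ 1)
    (σstar : Equiv.Perm (Fin m)) (i j : Fin m) (hσ : σstar i < σstar j) :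
    ∑ τ ∈ univ.filter (fun τ : Equiv.Perm (Fin m) => τ j < τ i), φ ^ ktDist τ σstar
      ≤ ∑ τ ∈ univ.filter (fun τ : Equiv.Perm (Fin m) => τ i < τ j), φ ^ ktDist τ σstar := by
  have step1 : ∑ τ ∈ univ.filter (fun τ : Equiv.Perm (Fin m) => τ j < τ i), φ ^ ktDist τ σstar
      ≤ ∑ τ ∈ univ.filter (fun τ : Equiv.Perm (Fin m) => τ j < τ i),
          φ ^ ktDist ((Equiv.swap i j).trans τ) σstar := by
    apply Finset.sum_le_sum
    intro τ hτ
    simp only [mem_filter] at hτ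
    exact pow_le_pow_of_le_one hφ0.le hφ1 (kt_swap_le σstar τ i j hσ hτ.2)
  refine step1.trans (le_of_eq ?_)
  refine Finset.sum_bij' (fun τ _ => (Equiv.swap i j).trans τ)
    (fun τ _ => (Equiv.swap i j).trans τ) ?_ ?_ ?_ ?_ ?_
  · intro τ hτ
    simp only [mem_filter, mem_univ, true_and] at hτ ⊢
    simpa using hτ
  · intro τ hτ
    simp only [mem_filter, mem_univ, true_and] at hτ ⊢
    simpa using hτ
  · intro τ _
    ext x
    simp [Equiv.swap_apply_self]
  · intro τ _
    ext x
    simp [Equiv.swap_apply_self]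
  · intro τ _
    rfl

/-- Under the Mallows model with reference ranking `σ*` and
dispersion `φ ∈ (0,1]`, the reference ranking minimizes the expected
Kendall's Tau distance: for all linear orders `σ`,
`E_{τ∼(σ*,φ)}[d_kt(σ*, τ)] ≤ E_{τ∼(σ*,φ)}[d_kt(σ, τ)]`. -/
theorem mallows_reference_minimizes {m : ℕ} (φ : ℝ) (hφ0 : 0 < φ) (hφ1 : φ ≤ 1)
    (σstar σ : Equiv.Perm (Fin m)) :
    ∑ τ : Equiv.Perm (Fin m), MMprob φ σstar τ * (ktDist σstar τ : ℝ)
      ≤ ∑ τ : Equiv.Perm (Fin m), MMprob φ σstar τ * (ktDist σ τ : ℝ) := by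
  classical
  set w : Equiv.Perm (Fin m) → ℝ := fun τ => φ ^ ktDist τ σstar with hw
  have hZ : 0 < ∑ τ' : Equiv.Perm (Fin m), w τ' :=
    Finset.sum_pos (fun τ _ => pow_pos hφ0 _) univ_nonempty
  -- Q a b : total weight of rankings preferring b over a
  set Q : Fin m → Fin m → ℝ :=
    fun a b => ∑ τ ∈ univ.filter (fun τ : Equiv.Perm (Fin m) => τ b < τ a), w τ with hQ
  have hQnn : ∀ a b, 0 ≤ Q a b := fun a b =>
    Finset.sum_nonneg fun τ _ => pow_nonneg hφ0.le _
  have expand : ∀ ρ : Equiv.Perm (Fin m), ∑ τ : Equiv.Perm (Fin m), w τ * (ktDist ρ τ : ℝ)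
      = ∑ p : Fin m × Fin m, if ρ p.1 < ρ p.2 then Q p.1 p.2 else 0 := by
    intro ρ
    have hd : ∀ τ : Equiv.Perm (Fin m), (ktDist ρ τ : ℝ)
        = ∑ p : Fin m × Fin m, if ρ p.1 < ρ p.2 ∧ τ p.2 < τ p.1 then (1:ℝ) else 0 := by
      intro τ
      rw [ktDist, Finset.card_filter]
      push_cast
      rfl
    calc ∑ τ : Equiv.Perm (Fin m), w τ * (ktDist ρ τ : ℝ)
        = ∑ τ : Equiv.Perm (Fin m), ∑ p : Fin m × Fin m,
            (if ρ p.1 < ρ p.2 ∧ τ p.2 < τ p.1 then w τ else 0) := by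
          refine Finset.sum_congr rfl fun τ _ => ?_
          rw [hd τ, Finset.mul_sum]
          refine Finset.sum_congr rfl fun p _ => ?_
          rw [mul_ite, mul_one, mul_zero]
      _ = ∑ p : Fin m × Fin m, ∑ τ : Equiv.Perm (Fin m),
            (if ρ p.1 < ρ p.2 ∧ τ p.2 < τ p.1 then w τ else 0) := Finset.sum_comm
      _ = ∑ p : Fin m × Fin m, if ρ p.1 < ρ p.2 then Q p.1 p.2 else 0 := by
          refine Finset.sum_congr rfl fun p _ => ?_
          by_cases hA : ρ p.1 < ρ p.2
          · simp only [hA, true_and, if_true, hQ]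
            rw [Finset.sum_filter]
          · simp [hA]
  -- reduce to the weighted-sum statement
  have main : ∑ τ : Equiv.Perm (Fin m), w τ * (ktDist σstar τ : ℝ)
      ≤ ∑ τ : Equiv.Perm (Fin m), w τ * (ktDist σ τ : ℝ) := by
    rw [expand σstar, expand σ]
    set f : Equiv.Perm (Fin m) → Fin m × Fin m → ℝ :=
      fun ρ p => if ρ p.1 < ρ p.2 then Q p.1 p.2 else 0 with hf
    have swap_sum : ∀ g : Fin m × Fin m → ℝ,
        ∑ p : Fin m × Fin m, g p.swap = ∑ p : Fin m × Fin m, g p := by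
      intro g
      exact Fintype.sum_equiv (Equiv.prodComm (Fin m) (Fin m)) _ _ (fun p => rfl)
    have pairwise : ∀ p : Fin m × Fin m,
        f σstar p + f σstar p.swap ≤ f σ p + f σ p.swap := by
      intro ⟨a, b⟩
      simp only [hf, Prod.swap_prod_mk]
      rcases lt_trichotomy (σstar a) (σstar b) with h | h | h
      · have h2 : ¬ σstar b < σstar a := lt_asymm h
        have hab : a ≠ b := fun hab => absurd h (by simp [hab])
        have hQle : Q a b ≤ Q b a := disc_le_conc φ hφ0 hφ1 σstar a b h
        rcases lt_trichotomy (σ a) (σ b) with h3 | h3 | h3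
        · have h4 : ¬ σ b < σ a := lt_asymm h3
          simp [h, h2, h3, h4]
        · exact absurd (σ.injective h3) hab
        · have h4 : ¬ σ a < σ b := lt_asymm h3
          simp only [h, h2, h3, h4, if_true, if_false]
          linarith
      · have hab : a = b := σstar.injective h
        subst hab
        simp [lt_irrefl]
      · have h2 : ¬ σstar a < σstar b := lt_asymm h
        have hab : a ≠ b := fun hab => absurd h (by simp [hab])
        have hQle : Q b a ≤ Q a b := disc_le_conc φ hφ0 hφ1 σstar b a h
        rcases lt_trichotomy (σ a) (σ b) with h3 | h3 | h3
        · have h4 : ¬ σ b < σ a := lt_asymm h3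
          simp only [h, h2, h3, h4, if_true, if_false]
          linarith
        · exact absurd (σ.injective h3) hab
        · have h4 : ¬ σ a < σ b := lt_asymm h3
          simp [h, h2, h3, h4]
      -- end pairwise
    have key : ∑ p : Fin m × Fin m, (f σstar p + f σstar p.swap)
        ≤ ∑ p : Fin m × Fin m, (f σ p + f σ p.swap) :=
      Finset.sum_le_sum fun p _ => pairwise p
    have d1 : ∑ p : Fin m × Fin m, (f σstar p + f σstar p.swap)
        = 2 * ∑ p : Fin m × Fin m, f σstar p := by
      rw [Finset.sum_add_distrib, swap_sum (f σstar)]; ring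
    have d2 : ∑ p : Fin m × Fin m, (f σ p + f σ p.swap)
        = 2 * ∑ p : Fin m × Fin m, f σ p := by
      rw [Finset.sum_add_distrib, swap_sum (f σ)]; ring
    rw [d1, d2] at key
    linarith
  simp only [MMprob]
  rw [show (∑ τ' : Equiv.Perm (Fin m), φ ^ ktDist τ' σstar) = ∑ τ', w τ' from rfl]
  simp only [div_mul_eq_mul_div, ← Finset.sum_div]
  exact div_le_div_of_nonneg_right main hZ.le
end
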